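/- Let s ∈ (0,1/2), let b > 0, and let φ : ℝⁿ → [0,1] be a smooth function with φ(ξ) = 0 for |ξ| < 1 and φ(ξ) = 1 for |ξ| > 2. Define q(ξ) = φ(ξ)/(|ξ|^{2s} + i b ξ_n); q is well defined and smooth because ||ξ|^{2s} + i b ξ_n| ≥ |ξ|^{2s} ≥ 1 whenever φ(ξ) ≠ 0. Then q belongs to the Hörmander class S^{−2s}_{2s,0}: for every multi-index β ∈ ℕⁿ there exists a constant C_β such that |∂_ξ^β q(ξ)| ≤ C_β (1+|ξ|)^{−2s − 2s|β|} for all ξ ∈ ℝⁿ. -/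

import Mathlib

/-- The constant-drift parametrix symbol `q(ξ) = φ(ξ)/(|ξ|^{2s} + i b ξ_n)`. -/
noncomputable def constDriftParametrix {n : ℕ} (s b : ℝ)
    (φ : EuclideanSpace ℝ (Fin (n + 1)) → ℝ) (ξ : EuclideanSpace ℝ (Fin (n + 1))) : ℂ :=
  ((φ ξ : ℝ) : ℂ) /
    (((‖ξ‖ ^ (2 * s) : ℝ) : ℂ) + Complex.I * (b : ℂ) * ((ξ (Fin.last n) : ℝ) : ℂ))

/-!
Where `φ = 1`, `q = 1/a` with `a(ξ) = |ξ|^{2s} + i b ξₙ`. Because of the drift term, `a` itself is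
only a symbol of type `(1,0)`; but `Re a = |ξ|^{2s}` gives `|1/a| ≤ |ξ|^{-2s}`, and
`Da ∈ S^0_{1,0} ⊆ S^0_{2s,0}` because `2s ≤ 1`. From `D(1/a) = -(1/a)² Da` and the Leibniz rule,
each derivative of `1/a` costs one more factor `|ξ|^{-2s}`, so `1/a ∈ S^{-2s}_{2s,0}`. On `|ξ| ≤ 2`
the derivatives of the smooth function `q` are bounded by compactness.
-/

open Set Filter Topology
open scoped ContDiff

section SymbolEstimates

variable {E F G : Type*} [NormedAddCommGroup E] [NormedSpace ℝ E] [NormedAddCommGroup F]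
  [NormedSpace ℝ F] [NormedAddCommGroup G] [NormedSpace ℝ G]

def exteriorUnitBall (E : Type*) [Norm E] : Set E := {ξ | 1 < ‖ξ‖}

local notation "𝒰" => exteriorUnitBall E

omit [NormedSpace ℝ E] in
theorem isOpen_exteriorUnitBall : IsOpen 𝒰 :=
  isOpen_lt continuous_const continuous_norm

theorem uniqueDiffOn_exteriorUnitBall : UniqueDiffOn ℝ 𝒰 :=
  isOpen_exteriorUnitBall.uniqueDiffOn

omit [NormedSpace ℝ E] in
theorem ne_zero_of_mem_exteriorUnitBall {ξ : E} (hξ : ξ ∈ 𝒰) : ξ ≠ 0 :=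
  norm_pos_iff.mp (one_pos.trans hξ)

omit [NormedSpace ℝ F] in
theorem nonneg_of_norm_le_mul_rpow {v : F} {C x e : ℝ} (hx : 0 < x) (h : ‖v‖ ≤ C * x ^ e) :
    0 ≤ C :=
  nonneg_of_mul_nonneg_left ((norm_nonneg v).trans h) (Real.rpow_pos_of_pos hx e)

/-- The estimates of the Hörmander class `S^μ_{ρ,0}` up to order `N`, imposed on `‖ξ‖ > 1`. -/
def SymbolEstimates (μ ρ : ℝ) (N : ℕ) (f : E → F) : Prop :=
  ∀ k ≤ N, ∃ C, ∀ ξ ∈ 𝒰, ‖iteratedFDerivWithin ℝ k f 𝒰 ξ‖ ≤ C * ‖ξ‖ ^ (μ - ρ * k)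

variable {μ ν ρ μ' ρ' : ℝ} {M N : ℕ} {f g : E → F}

namespace SymbolEstimates

theorem of_norm_le {C : ℝ} (h : ∀ ξ ∈ 𝒰, ‖f ξ‖ ≤ C * ‖ξ‖ ^ μ) : SymbolEstimates μ ρ 0 f := by
  intro k hk
  obtain rfl := Nat.le_zero.mp hk
  exact ⟨C, fun ξ hξ => by simpa using h ξ hξ⟩

theorem le_order (h : SymbolEstimates μ ρ N f) (hMN : M ≤ N) : SymbolEstimates μ ρ M f :=
  fun k hk => h k (hk.trans hMN)

theorem congr (h : SymbolEstimates μ ρ N f) (hfg : EqOn f g 𝒰) : SymbolEstimates μ ρ N g :=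
  fun k hk => (h k hk).imp fun _ hC ξ hξ => by
    rw [iteratedFDerivWithin_congr hfg.symm hξ]
    exact hC ξ hξ

theorem mono (h : SymbolEstimates μ ρ N f) (hμ : μ ≤ μ') (hρ : ρ' ≤ ρ) :
    SymbolEstimates μ' ρ' N f := by
  intro k hk
  obtain ⟨C, hC⟩ := h k hk
  refine ⟨C, fun ξ hξ => (hC ξ hξ).trans ?_⟩
  have hC0 := nonneg_of_norm_le_mul_rpow (one_pos.trans hξ) (hC ξ hξ)
  have hexp : μ - ρ * k ≤ μ' - ρ' * k :=
    sub_le_sub hμ (mul_le_mul_of_nonneg_right hρ k.cast_nonneg)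
  gcongr
  exact hξ.le

theorem of_fderivWithin (h₀ : SymbolEstimates μ ρ 0 f)
    (h : SymbolEstimates (μ - ρ) ρ N (fderivWithin ℝ f 𝒰)) : SymbolEstimates μ ρ (N + 1) f := by
  rintro (_ | k) hk
  · exact h₀ 0 le_rfl
  · obtain ⟨C, hC⟩ := h k (by omega)
    refine ⟨C, fun ξ hξ => ?_⟩
    rw [← norm_iteratedFDerivWithin_fderivWithin uniqueDiffOn_exteriorUnitBall hξ]
    convert hC ξ hξ using 3
    push_cast
    ring

protected theorem fderivWithin (h : SymbolEstimates μ ρ (N + 1) f) :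
    SymbolEstimates (μ - ρ) ρ N (fderivWithin ℝ f 𝒰) := by
  intro k hk
  obtain ⟨C, hC⟩ := h (k + 1) (by omega)
  refine ⟨C, fun ξ hξ => ?_⟩
  rw [norm_iteratedFDerivWithin_fderivWithin uniqueDiffOn_exteriorUnitBall hξ]
  convert hC ξ hξ using 3
  push_cast
  ring

protected theorem neg (h : SymbolEstimates μ ρ N f) : SymbolEstimates μ ρ N (-f) :=
  fun k hk => (h k hk).imp fun _ hC ξ hξ => by
    rw [iteratedFDerivWithin_neg_apply uniqueDiffOn_exteriorUnitBall hξ, norm_neg]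
    exact hC ξ hξ

protected theorem add (hf : SymbolEstimates μ ρ N f) (hg : SymbolEstimates μ ρ N g)
    (hf' : ContDiffOn ℝ N f 𝒰) (hg' : ContDiffOn ℝ N g 𝒰) : SymbolEstimates μ ρ N (f + g) := by
  intro k hk
  obtain ⟨Cf, hCf⟩ := hf k hk
  obtain ⟨Cg, hCg⟩ := hg k hk
  refine ⟨Cf + Cg, fun ξ hξ => ?_⟩
  have hkN : (k : WithTop ℕ∞) ≤ N := by exact_mod_cast hk
  rw [iteratedFDerivWithin_add_apply ((hf' ξ hξ).of_le hkN) ((hg' ξ hξ).of_le hkN)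
    uniqueDiffOn_exteriorUnitBall hξ, add_mul]
  exact (norm_add_le _ _).trans (add_le_add (hCf ξ hξ) (hCg ξ hξ))

theorem clm_comp (L : F →L[ℝ] G) (h : SymbolEstimates μ ρ N f) (hf : ContDiffOn ℝ N f 𝒰) :
    SymbolEstimates μ ρ N (L ∘ f) := by
  intro k hk
  obtain ⟨C, hC⟩ := h k hk
  refine ⟨‖L‖ * C, fun ξ hξ => ?_⟩
  refine (L.norm_iteratedFDerivWithin_comp_left (hf ξ hξ) uniqueDiffOn_exteriorUnitBall hξ
    (by exact_mod_cast hk)).trans ?_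
  rw [mul_assoc]
  exact mul_le_mul_of_nonneg_left (hC ξ hξ) (norm_nonneg L)

protected theorem smul {𝕜 : Type*} [NormedField 𝕜] [NormedAlgebra ℝ 𝕜] [NormedSpace 𝕜 F]
    [IsScalarTower ℝ 𝕜 F] {c : E → 𝕜} (hc : SymbolEstimates μ ρ N c)
    (hf : SymbolEstimates ν ρ N f) (hc' : ContDiffOn ℝ N c 𝒰) (hf' : ContDiffOn ℝ N f 𝒰) :
    SymbolEstimates (μ + ν) ρ N (fun ξ => c ξ • f ξ) := by
  choose! Cc hCc using hc
  choose! Cf hCf using hf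
  intro k hk
  refine ⟨∑ i ∈ Finset.range (k + 1), k.choose i * (Cc i * Cf (k - i)), fun ξ hξ => ?_⟩
  refine (norm_iteratedFDerivWithin_smul_le hc' hf' uniqueDiffOn_exteriorUnitBall hξ
    (by exact_mod_cast hk)).trans ?_
  rw [Finset.sum_mul]
  refine Finset.sum_le_sum fun i hi => ?_
  have hik : i ≤ k := Nat.lt_succ_iff.mp (Finset.mem_range.mp hi)
  have hexp : μ + ν - ρ * k = (μ - ρ * i) + (ν - ρ * (k - i : ℕ)) := by
    push_cast [Nat.cast_sub hik]
    ring
  have hci := hCc i (hik.trans hk) ξ hξ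
  have hfi := hCf (k - i) ((Nat.sub_le k i).trans hk) ξ hξ
  calc (k.choose i : ℝ) * ‖iteratedFDerivWithin ℝ i c 𝒰 ξ‖ * ‖iteratedFDerivWithin ℝ (k - i) f 𝒰 ξ‖
      = k.choose i * (‖iteratedFDerivWithin ℝ i c 𝒰 ξ‖ * ‖iteratedFDerivWithin ℝ (k - i) f 𝒰 ξ‖) :=
        mul_assoc _ _ _
    _ ≤ k.choose i * ((Cc i * ‖ξ‖ ^ (μ - ρ * i)) * (Cf (k - i) * ‖ξ‖ ^ (ν - ρ * (k - i : ℕ)))) :=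
        mul_le_mul_of_nonneg_left
          (mul_le_mul hci hfi (norm_nonneg _) ((norm_nonneg _).trans hci)) (Nat.cast_nonneg _)
    _ = k.choose i * (Cc i * Cf (k - i)) * ‖ξ‖ ^ (μ + ν - ρ * k) := by
        rw [hexp, Real.rpow_add (one_pos.trans hξ)]
        ring

end SymbolEstimates

theorem symbolEstimates_const (c : F) (ρ : ℝ) (N : ℕ) : SymbolEstimates 0 ρ N (fun _ : E => c) := by
  rintro (_ | k) -
  · exact ⟨‖c‖, fun ξ _ => by simp⟩
  · exact ⟨0, fun ξ _ => by simp [iteratedFDerivWithin_const_of_ne k.succ_ne_zero]⟩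

theorem symbolEstimates_clm (L : E →L[ℝ] F) : ∀ N, SymbolEstimates 1 1 N L
  | 0 => .of_norm_le (C := ‖L‖) fun ξ _ => by simpa using L.le_opNorm ξ
  | N + 1 => by
    refine (symbolEstimates_clm L 0).of_fderivWithin ?_
    rw [sub_self]
    exact (symbolEstimates_const L 1 N).congr fun ξ hξ =>
      (L.fderivWithin (uniqueDiffOn_exteriorUnitBall ξ hξ)).symm

theorem SymbolEstimates.inv {𝕜 : Type*} [RCLike 𝕜] {a : E → 𝕜} (ha : ContDiffOn ℝ ∞ a 𝒰)
    (ha₀ : ∀ ξ ∈ 𝒰, a ξ ≠ 0) (h₀ : SymbolEstimates (-μ) ρ 0 (fun ξ => (a ξ)⁻¹))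
    (hda : ∀ N, SymbolEstimates (μ - ρ) ρ N (fderivWithin ℝ a 𝒰)) (N : ℕ) :
    SymbolEstimates (-μ) ρ N (fun ξ => (a ξ)⁻¹) := by
  have hr : ContDiffOn ℝ ∞ (fun ξ => (a ξ)⁻¹) 𝒰 := ha.inv ha₀
  have hderiv : EqOn (fun ξ => (-((a ξ)⁻¹ • (a ξ)⁻¹)) • fderivWithin ℝ a 𝒰 ξ)
      (fderivWithin ℝ (fun ξ => (a ξ)⁻¹) 𝒰) 𝒰 := fun ξ hξ => by
    have hd := ((ha.differentiableOn (by simp)) ξ hξ).hasFDerivWithinAt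
    have := ((hasDerivAt_inv (ha₀ ξ hξ)).comp_hasFDerivWithinAt ξ hd).fderivWithin
      (uniqueDiffOn_exteriorUnitBall ξ hξ)
    rw [Function.comp_def] at this
    rw [this, sq, mul_inv]
    rfl
  induction N with
  | zero => exact h₀
  | succ N ih =>
    have hrN : ContDiffOn ℝ N (fun ξ => (a ξ)⁻¹) 𝒰 := hr.of_le (by exact_mod_cast le_top)
    refine h₀.of_fderivWithin ?_
    refine ((((ih.smul ih hrN hrN).neg).smul (hda N) ?_ ?_).congr hderiv).mono (by linarith) le_rfl
    · exact (hrN.smul hrN).neg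
    · exact ha.fderivWithin uniqueDiffOn_exteriorUnitBall (m := N) (by exact_mod_cast le_top)

end SymbolEstimates

section DriftSymbol

variable {E : Type*} [NormedAddCommGroup E] [InnerProductSpace ℝ E]

local notation "𝒰" => exteriorUnitBall E

theorem hasFDerivAt_norm_rpow_of_ne_zero {x : E} (hx : x ≠ 0) (p : ℝ) :
    HasFDerivAt (fun x : E ↦ ‖x‖ ^ p) ((p * ‖x‖ ^ (p - 2)) • innerSL ℝ x) x := by
  apply HasStrictFDerivAt.hasFDerivAt
  convert! (hasStrictFDerivAt_norm_sq x).rpow_const (p := p / 2) (by simp [hx]) using 0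
  simp_rw [← Real.rpow_natCast_mul (norm_nonneg _), ← Nat.cast_smul_eq_nsmul ℝ, smul_smul]
  ring_nf

theorem contDiffAt_norm_rpow {x : E} (hx : x ≠ 0) (p : ℝ) {n : WithTop ℕ∞} :
    ContDiffAt ℝ n (fun ξ : E => ‖ξ‖ ^ p) x :=
  (contDiffAt_norm ℝ hx).rpow_const_of_ne (norm_ne_zero_iff.mpr hx)

theorem contDiffOn_norm_rpow (p : ℝ) : ContDiffOn ℝ ∞ (fun ξ : E => ‖ξ‖ ^ p) 𝒰 :=
  fun _ hξ => (contDiffAt_norm_rpow (ne_zero_of_mem_exteriorUnitBall hξ) p).contDiffWithinAt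

theorem symbolEstimates_norm_rpow (N : ℕ) :
    ∀ p : ℝ, SymbolEstimates p 1 N (fun ξ : E => ‖ξ‖ ^ p) := by
  induction N with
  | zero =>
    exact fun p => .of_norm_le (C := 1) fun ξ _ => by
      rw [one_mul, Real.norm_of_nonneg (by positivity)]
  | succ N ih =>
    intro p
    have hderiv : EqOn (fun ξ => ‖ξ‖ ^ (p - 2) • (p • innerSL ℝ : E →L[ℝ] E →L[ℝ] ℝ) ξ)
        (fderivWithin ℝ (fun ξ => ‖ξ‖ ^ p) 𝒰) 𝒰 := fun ξ hξ => by
      rw [(hasFDerivAt_norm_rpow_of_ne_zero (ne_zero_of_mem_exteriorUnitBall hξ) p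
        ).hasFDerivWithinAt.fderivWithin (uniqueDiffOn_exteriorUnitBall ξ hξ)]
      simp [smul_smul, mul_comm]
    refine ((ih p).le_order N.zero_le).of_fderivWithin ?_
    refine (((ih (p - 2)).smul (symbolEstimates_clm _ N) ?_
      (ContinuousLinearMap.contDiff _).contDiffOn).congr hderiv).mono (by linarith) le_rfl
    exact (contDiffOn_norm_rpow _).of_le (by exact_mod_cast le_top)

/-- With `p = 2s` and `ℓ = lastCoordDrift n b`, i.e. `ℓ ξ = i b ξₙ`, this is the symbol
`|ξ|^{2s} + i b ξₙ` of the fractional Laplacian with constant drift. -/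
noncomputable def driftSymbol (p : ℝ) (ℓ : E →L[ℝ] ℂ) (ξ : E) : ℂ := ((‖ξ‖ ^ p : ℝ) : ℂ) + ℓ ξ

variable {p : ℝ} {ℓ : E →L[ℝ] ℂ}

theorem rpow_le_norm_driftSymbol (hℓ : ∀ ξ, (ℓ ξ).re = 0) (ξ : E) :
    ‖ξ‖ ^ p ≤ ‖driftSymbol p ℓ ξ‖ := by
  have := Complex.abs_re_le_norm (driftSymbol p ℓ ξ)
  simp only [driftSymbol, Complex.add_re, Complex.ofReal_re, hℓ, add_zero] at this
  exact (le_abs_self _).trans this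

theorem driftSymbol_ne_zero (hℓ : ∀ ξ, (ℓ ξ).re = 0) {ξ : E} (hξ : ξ ≠ 0) :
    driftSymbol p ℓ ξ ≠ 0 :=
  norm_pos_iff.mp ((Real.rpow_pos_of_pos (norm_pos_iff.mpr hξ) p).trans_le
    (rpow_le_norm_driftSymbol hℓ ξ))

theorem contDiffAt_driftSymbol {ξ : E} (hξ : ξ ≠ 0) {n : WithTop ℕ∞} :
    ContDiffAt ℝ n (driftSymbol p ℓ) ξ :=
  (Complex.ofRealCLM.contDiff.contDiffAt.comp ξ (contDiffAt_norm_rpow hξ p)).add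
    ℓ.contDiff.contDiffAt

theorem symbolEstimates_driftSymbol_inv (hp : p ≤ 1) (hℓ : ∀ ξ, (ℓ ξ).re = 0) (N : ℕ) :
    SymbolEstimates (-p) p N (fun ξ => (driftSymbol p ℓ ξ)⁻¹) := by
  have ha : ContDiffOn ℝ ∞ (driftSymbol p ℓ) 𝒰 := fun _ hξ =>
    (contDiffAt_driftSymbol (ne_zero_of_mem_exteriorUnitBall hξ)).contDiffWithinAt
  refine SymbolEstimates.inv ha
    (fun ξ hξ => driftSymbol_ne_zero hℓ (ne_zero_of_mem_exteriorUnitBall hξ))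
    (.of_norm_le (C := 1) fun ξ hξ => ?_) (fun N => ?_) N
  · rw [norm_inv, one_mul, Real.rpow_neg (norm_nonneg _)]
    exact inv_anti₀ (Real.rpow_pos_of_pos (one_pos.trans hξ) p) (rpow_le_norm_driftSymbol hℓ ξ)
  · have hN : ((N + 1 : ℕ) : WithTop ℕ∞) ≤ ∞ := by exact_mod_cast le_top
    have h : SymbolEstimates 1 1 (N + 1) (driftSymbol p ℓ) :=
      (((symbolEstimates_norm_rpow (N + 1) p).mono hp le_rfl).clm_comp Complex.ofRealCLM
        ((contDiffOn_norm_rpow p).of_le hN)).add (symbolEstimates_clm ℓ (N + 1))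
        ((Complex.ofRealCLM.contDiff.comp_contDiffOn (contDiffOn_norm_rpow p)).of_le hN)
        ℓ.contDiff.contDiffOn
    exact h.fderivWithin.mono (le_of_eq (by ring)) hp

end DriftSymbol

theorem rpow_le_two_rpow_neg_mul_one_add_rpow {x e : ℝ} (hx : 1 ≤ x) (he : e ≤ 0) :
    x ^ e ≤ 2 ^ (-e) * (1 + x) ^ e := by
  have hx0 : 0 < x := one_pos.trans_le hx
  calc x ^ e = 2 ^ (-e) * (2 * x) ^ e := by
        rw [Real.mul_rpow zero_le_two hx0.le, ← mul_assoc, ← Real.rpow_add two_pos,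
          neg_add_cancel, Real.rpow_zero, one_mul]
    _ ≤ 2 ^ (-e) * (1 + x) ^ e :=
        mul_le_mul_of_nonneg_left (Real.rpow_le_rpow_of_nonpos (by positivity) (by linarith) he)
          (by positivity)

theorem exists_norm_le_mul_one_add_norm_rpow {E F : Type*} [NormedAddCommGroup E] [ProperSpace E]
    [NormedAddCommGroup F] {g : E → F} (hg : Continuous g) {R C e : ℝ} (hR : 1 ≤ R) (he : e ≤ 0)
    (hfar : ∀ ξ, R < ‖ξ‖ → ‖g ξ‖ ≤ C * ‖ξ‖ ^ e) : ∃ C', ∀ ξ, ‖g ξ‖ ≤ C' * (1 + ‖ξ‖) ^ e := by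
  obtain ⟨M, hM⟩ := (isCompact_closedBall (0 : E) R).exists_bound_of_continuousOn hg.continuousOn
  refine ⟨max (M * (1 + R) ^ (-e)) (max C 0 * 2 ^ (-e)), fun ξ => ?_⟩
  rcases le_or_gt ‖ξ‖ R with hξ | hξ
  · have hgM := hM ξ (mem_closedBall_zero_iff.mpr hξ)
    have hM0 : 0 ≤ M := (norm_nonneg _).trans hgM
    calc ‖g ξ‖ ≤ M * (1 + R) ^ (-e) * (1 + R) ^ e := by
          rw [mul_assoc, ← Real.rpow_add (by positivity), neg_add_cancel, Real.rpow_zero, mul_one]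
          exact hgM
      _ ≤ M * (1 + R) ^ (-e) * (1 + ‖ξ‖) ^ e :=
          mul_le_mul_of_nonneg_left (Real.rpow_le_rpow_of_nonpos (by positivity) (by linarith) he)
            (by positivity)
      _ ≤ _ := by gcongr; exact le_max_left _ _
  · calc ‖g ξ‖ ≤ max C 0 * ‖ξ‖ ^ e := (hfar ξ hξ).trans (by gcongr; exact le_max_left _ _)
      _ ≤ max C 0 * (2 ^ (-e) * (1 + ‖ξ‖) ^ e) := by
          gcongr
          exact rpow_le_two_rpow_neg_mul_one_add_rpow (by linarith) he
      _ ≤ _ := by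
          rw [← mul_assoc]
          gcongr
          exact le_max_right _ _

theorem contDiff_div_of_forall_eventuallyEq_zero_or {E 𝕜 : Type*} [NormedAddCommGroup E]
    [NormedSpace ℝ E] [RCLike 𝕜] {n : WithTop ℕ∞} {f g : E → 𝕜} (hf : ContDiff ℝ n f)
    (h : ∀ x, f =ᶠ[𝓝 x] 0 ∨ (ContDiffAt ℝ n g x ∧ g x ≠ 0)) :
    ContDiff ℝ n (fun x => f x / g x) := by
  refine contDiff_iff_contDiffAt.2 fun x => ?_
  rcases h x with h0 | ⟨hg, hg0⟩
  · exact (contDiffAt_const (c := (0 : 𝕜))).congr_of_eventuallyEq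
      (h0.mono fun y hy => by simp [hy])
  · simp only [div_eq_mul_inv]
    exact hf.contDiffAt.mul (hg.inv hg0)

section ConstDrift

variable {n : ℕ} {s b : ℝ} {φ : EuclideanSpace ℝ (Fin (n + 1)) → ℝ}

noncomputable def lastCoordDrift (n : ℕ) (b : ℝ) : EuclideanSpace ℝ (Fin (n + 1)) →L[ℝ] ℂ :=
  (EuclideanSpace.proj (Fin.last n)).smulRight (Complex.I * b)

theorem re_lastCoordDrift (ξ : EuclideanSpace ℝ (Fin (n + 1))) :
    (lastCoordDrift n b ξ).re = 0 := by
  simp [lastCoordDrift]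

theorem constDriftParametrix_eq_div_driftSymbol :
    constDriftParametrix s b φ =
      fun ξ => (φ ξ : ℂ) / driftSymbol (2 * s) (lastCoordDrift n b) ξ := by
  funext ξ
  simp only [constDriftParametrix, driftSymbol, lastCoordDrift,
    ContinuousLinearMap.smulRight_apply, PiLp.proj_apply, Complex.real_smul]
  ring

theorem contDiff_constDriftParametrix (hφ : ContDiff ℝ ∞ φ) (hφ0 : ∀ ξ, ‖ξ‖ < 1 → φ ξ = 0) :
    ContDiff ℝ ∞ (constDriftParametrix s b φ) := by
  rw [constDriftParametrix_eq_div_driftSymbol]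
  refine contDiff_div_of_forall_eventuallyEq_zero_or (Complex.ofRealCLM.contDiff.comp hφ)
    fun ξ => ?_
  rcases lt_or_ge ‖ξ‖ 1 with hξ | hξ
  · refine .inl ?_
    filter_upwards [(isOpen_lt continuous_norm continuous_const).mem_nhds hξ] with η hη
    simp [hφ0 η hη]
  · have hξ0 : ξ ≠ 0 := norm_pos_iff.mp (one_pos.trans_le hξ)
    exact .inr ⟨contDiffAt_driftSymbol hξ0, driftSymbol_ne_zero re_lastCoordDrift hξ0⟩

theorem constDriftParametrix_eventuallyEq_inv (hφ1 : ∀ ξ, 2 < ‖ξ‖ → φ ξ = 1)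
    {ξ : EuclideanSpace ℝ (Fin (n + 1))} (hξ : 2 < ‖ξ‖) :
    constDriftParametrix s b φ =ᶠ[𝓝 ξ] fun η => (driftSymbol (2 * s) (lastCoordDrift n b) η)⁻¹ := by
  filter_upwards [(isOpen_lt continuous_const continuous_norm).mem_nhds hξ] with η hη
  simp [constDriftParametrix_eq_div_driftSymbol, hφ1 η hη]

end ConstDrift

theorem stmt_16_general (n : ℕ) (s b : ℝ) (hs0 : 0 < s) (hs2 : s < 1 / 2)
    (φ : EuclideanSpace ℝ (Fin (n + 1)) → ℝ)
    (hφ : ContDiff ℝ (⊤ : ℕ∞) φ)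
    (hφ0 : ∀ ξ : EuclideanSpace ℝ (Fin (n + 1)), ‖ξ‖ < 1 → φ ξ = 0)
    (hφ1 : ∀ ξ : EuclideanSpace ℝ (Fin (n + 1)), 2 < ‖ξ‖ → φ ξ = 1) :
    ContDiff ℝ (⊤ : ℕ∞) (constDriftParametrix s b φ) ∧
    ∀ m : ℕ, ∃ C : ℝ, ∀ ξ : EuclideanSpace ℝ (Fin (n + 1)),
      ‖iteratedFDeriv ℝ m (constDriftParametrix s b φ) ξ‖
        ≤ C * (1 + ‖ξ‖) ^ (-(2 * s) - 2 * s * (m : ℝ)) := by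
  have hsmooth := contDiff_constDriftParametrix (s := s) (b := b) hφ hφ0
  refine ⟨hsmooth, fun m => ?_⟩
  obtain ⟨C, hC⟩ :=
    symbolEstimates_driftSymbol_inv (p := 2 * s) (by linarith) re_lastCoordDrift m m le_rfl
  have he : -(2 * s) - 2 * s * (m : ℝ) ≤ 0 := by
    have : 0 ≤ 2 * s * (m : ℝ) := by positivity
    linarith
  refine exists_norm_le_mul_one_add_norm_rpow (C := C)
    (hsmooth.continuous_iteratedFDeriv (by exact_mod_cast le_top)) one_le_two he fun ξ hξ => ?_
  have hξU : ξ ∈ exteriorUnitBall _ := one_lt_two.trans hξ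
  rw [((constDriftParametrix_eventuallyEq_inv hφ1 hξ).iteratedFDeriv ℝ m).eq_of_nhds,
    ← iteratedFDerivWithin_of_isOpen m isOpen_exteriorUnitBall hξU]
  exact hC ξ hξU

/-- For `s ∈ (0,1/2)`, `b > 0`, and `φ` a smooth cut-off vanishing for `|ξ| < 1` and equal
to `1` for `|ξ| > 2`, the symbol `q(ξ) = φ(ξ)/(|ξ|^{2s} + i b ξ_n)` is smooth and lies in
the Hörmander class `S^{-2s}_{2s,0}`: for every `m` there is `C_m` with
`‖D^m q(ξ)‖ ≤ C_m (1+|ξ|)^{-2s-2sm}` for all `ξ`. -/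
theorem stmt_16 (n : ℕ) (s b : ℝ) (hs0 : 0 < s) (hs2 : s < 1 / 2) (hb : 0 < b)
    (φ : EuclideanSpace ℝ (Fin (n + 1)) → ℝ)
    (hφ : ContDiff ℝ (⊤ : ℕ∞) φ)
    (hφ01 : ∀ ξ, φ ξ ∈ Set.Icc (0 : ℝ) 1)
    (hφ0 : ∀ ξ : EuclideanSpace ℝ (Fin (n + 1)), ‖ξ‖ < 1 → φ ξ = 0)
    (hφ1 : ∀ ξ : EuclideanSpace ℝ (Fin (n + 1)), 2 < ‖ξ‖ → φ ξ = 1) :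
    ContDiff ℝ (⊤ : ℕ∞) (constDriftParametrix s b φ) ∧
    ∀ m : ℕ, ∃ C : ℝ, ∀ ξ : EuclideanSpace ℝ (Fin (n + 1)),
      ‖iteratedFDeriv ℝ m (constDriftParametrix s b φ) ξ‖
        ≤ C * (1 + ‖ξ‖) ^ (-(2 * s) - 2 * s * (m : ℝ)) :=
  stmt_16_general n s b hs0 hs2 φ hφ hφ0 hφ1
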